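/- In the sandpile group G(d,h) of the d-regular tree of depth h, if j₁ and j₂ are siblings at depth n (1 ≤ n ≤ h), then the order of x̄_{j₁} − x̄_{j₂} is exactly θ(d, h+2−n) = ((d−1)^{h+2−n} − 1)/(d−2). -/

import Mathlib

namespace SandpileTree

/-- Vertices of the rooted `d`-regular tree of depth `h`: a depth `n ≤ h` together with
the path of steps from the root, padded with value `0` beyond the depth.
The step out of the root has `d` choices; each later step has `d - 1` choices. -/
def Vert (d h : ℕ) : Type :=
  {p : Fin (h + 1) × (Fin h → Fin d) //
    (∀ i : Fin h, (p.1 : ℕ) ≤ (i : ℕ) → (p.2 i : ℕ) = 0) ∧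
    (∀ i : Fin h, 0 < (i : ℕ) → (i : ℕ) < (p.1 : ℕ) → (p.2 i : ℕ) < d - 1)}

instance (d h : ℕ) : DecidableEq (Vert d h) := by unfold Vert; infer_instance
instance (d h : ℕ) : Fintype (Vert d h) := by unfold Vert; infer_instance

/-- The depth (distance from the root) of a vertex. -/
def depth {d h : ℕ} (v : Vert d h) : ℕ := (v.1.1 : ℕ)

/-- The root of the tree. -/
def root (d h : ℕ) (hd : 0 < d) : Vert d h :=
  ⟨(0, fun _ => ⟨0, hd⟩), by constructor <;> intro i <;> simp⟩

/-- `IsParent i j` means that `i` is the parent of `j` in the rooted tree. -/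
def IsParent {d h : ℕ} (i j : Vert d h) : Prop :=
  depth j = depth i + 1 ∧ ∀ k : Fin h, (k : ℕ) < depth i → j.1.2 k = i.1.2 k

instance {d h : ℕ} (i j : Vert d h) : Decidable (IsParent i j) := by
  unfold IsParent; infer_instance

/-- The row of the reduced Laplacian of the augmented tree corresponding to vertex `i`:
`δ i = d·x_i − x_{parent i} − ∑_{j child of i} x_j` (no parent term for the root, and
no children terms for the leaves, which are attached to the sink by `d-1` edges). -/
def delta (d h : ℕ) (i : Vert d h) : Vert d h → ℤ :=
  (d : ℤ) • Pi.single i 1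
    - ∑ j ∈ Finset.univ.filter (fun j => IsParent j i), Pi.single j 1
    - ∑ j ∈ Finset.univ.filter (fun j => IsParent i j), Pi.single j 1

/-- The lattice `Λ ⊆ ℤ^V` spanned by the rows of the reduced Laplacian. -/
def lat (d h : ℕ) : AddSubgroup (Vert d h → ℤ) :=
  AddSubgroup.closure (Set.range (delta d h))

/-- The sandpile group `G(d,h) = ℤ^V / Λ` of the `d`-regular tree of depth `h`. -/
abbrev SG (d h : ℕ) : Type := (Vert d h → ℤ) ⧸ lat d h

/-- The image `x̄ᵢ` of the standard basis vector `xᵢ` in the sandpile group. -/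
def xbar (d h : ℕ) (i : Vert d h) : SG d h :=
  QuotientAddGroup.mk (Pi.single i 1)

/-- `θ(d,n) = ((d-1)^n - 1)/(d-2)`. -/
def theta (d n : ℕ) : ℕ := ((d - 1) ^ n - 1) / (d - 2)

end SandpileTree

/-!
Write `w_j` for the function equal to `θ(d, h + 1 - depth v)` on the subtree below `j` and to `0`
elsewhere. By the recurrence `d θ(m + 1) = θ(m + 2) + (d - 1) θ(m)`, the Laplacian of `w_j` is
`θ(d, h + 2 - depth j) x_j - θ(d, h + 1 - depth j) x_{parent j}`, so for siblings the Laplacian of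
`w = w_{j₁} - w_{j₂}` is `θ(d, h + 2 - n) (x_{j₁} - x_{j₂})`. The Laplacian is injective by the
maximum principle: a deepest maximum of a harmonic function must sit at a leaf, where `d - 1` of
the `d` neighbours are the sink, forcing it to be `≤ 0`. Hence `k (x_{j₁} - x_{j₂}) ∈ Λ` forces
`θ(d, h + 2 - n) c = k w` for some `c`, and evaluating at `j₁`, where `w = θ(d, h + 1 - n)` is
coprime to `θ(d, h + 2 - n)`, gives `θ(d, h + 2 - n) ∣ k`.
-/

lemma smul_mem_range_iff_dvd {R ι N : Type*} [CommRing R] [AddCommGroup N] [Module R N]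
    {L : (ι → R) →ₗ[R] N} (hL : Function.Injective L) {g : ι → R} {t : R} {y : N}
    (hg : L g = t • y) {ℓ : ι} (hcop : IsCoprime t (g ℓ)) (k : R) :
    k • y ∈ LinearMap.range L ↔ t ∣ k := by
  constructor
  · rintro ⟨c, hc⟩
    have htc : t • c = k • g := hL (by rw [map_smul, map_smul, hc, hg, smul_comm])
    exact hcop.dvd_of_dvd_mul_right ⟨c ℓ, by simpa using (congrFun htc ℓ).symm⟩
  · rintro ⟨r, rfl⟩
    exact ⟨r • g, by rw [map_smul, hg, smul_smul, mul_comm]⟩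

lemma addOrderOf_mk_eq_of_nsmul_mem_iff {G : Type*} [AddCommGroup G] {H : AddSubgroup G} {y : G}
    {t : ℕ} (hy : ∀ k : ℕ, k • y ∈ H ↔ t ∣ k) : addOrderOf (y : G ⧸ H) = t :=
  Nat.dvd_right_iff_eq.mp fun k => by
    rw [addOrderOf_dvd_iff_nsmul_eq_zero, ← QuotientAddGroup.mk_nsmul,
      QuotientAddGroup.eq_zero_iff, hy]

namespace SandpileTree

variable {d h : ℕ}

lemma depth_le (v : Vert d h) : depth v ≤ h := Nat.lt_succ_iff.mp v.1.1.isLt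

lemma Vert.ext_of_depth {u v : Vert d h} (hdepth : depth u = depth v)
    (hpath : ∀ k : Fin h, (k : ℕ) < depth u → u.1.2 k = v.1.2 k) : u = v := by
  refine Subtype.ext (Prod.ext (Fin.ext hdepth) (funext fun k => ?_))
  by_cases hk : (k : ℕ) < depth u
  · exact hpath k hk
  · exact Fin.ext ((u.2.1 k (not_lt.mp hk)).trans (v.2.1 k (show depth v ≤ k by omega)).symm)

lemma IsParent.unique {u u' v : Vert d h} (hu : IsParent u v) (hu' : IsParent u' v) :
    u = u' :=
  Vert.ext_of_depth (by have := hu.1; have := hu'.1; omega) fun k hk =>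
    (hu.2 k hk).symm.trans (hu'.2 k (by have := hu.1; have := hu'.1; omega))

lemma exists_isParent {v : Vert d h} (hv : 0 < depth v) : ∃ p, IsParent p v := by
  refine ⟨⟨(⟨depth v - 1, by have := depth_le v; omega⟩,
    fun k => if (k : ℕ) < depth v - 1 then v.1.2 k else ⟨0, (v.1.2 k).pos⟩), ?_, ?_⟩, ?_, ?_⟩
  · intro k hk
    simp only at hk ⊢
    rw [if_neg (by omega)]
  · intro k hk0 hk
    simp only at hk ⊢
    rw [if_pos hk]
    exact v.2.2 k hk0 (show k < depth v by omega)
  · show depth v = depth v - 1 + 1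
    omega
  · intro k hk
    exact (if_pos hk).symm

def childOf (u : Vert d h) (hu : depth u < h) (t : ℕ) (ht : t < d)
    (ht' : 0 < depth u → t < d - 1) : Vert d h :=
  ⟨(⟨depth u + 1, by omega⟩, fun k => if (k : ℕ) = depth u then ⟨t, ht⟩ else u.1.2 k), by
    refine ⟨fun k hk => ?_, fun k hk0 hk => ?_⟩ <;> simp only at hk ⊢
    · rw [if_neg (by omega)]
      exact u.2.1 k (show depth u ≤ k by omega)
    · split_ifs with hku
      · exact ht' (by omega)
      · exact u.2.2 k hk0 (show k < depth u by omega)⟩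

lemma isParent_childOf (u : Vert d h) (hu : depth u < h) (t : ℕ) (ht : t < d)
    (ht' : 0 < depth u → t < d - 1) : IsParent u (childOf u hu t ht ht') :=
  ⟨rfl, fun k hk => if_neg (by omega)⟩

lemma childOf_step (u : Vert d h) (hu : depth u < h) (t : ℕ) (ht : t < d)
    (ht' : 0 < depth u → t < d - 1) : ((childOf u hu t ht ht').1.2 ⟨depth u, hu⟩ : ℕ) = t := by
  simp [childOf]

lemma childOf_eq_of_isParent {u v : Vert d h} (hp : IsParent u v) (hu : depth u < h)
    (ht' : 0 < depth u → (v.1.2 ⟨depth u, hu⟩ : ℕ) < d - 1) :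
    childOf u hu _ (v.1.2 ⟨depth u, hu⟩).isLt ht' = v := by
  refine Vert.ext_of_depth hp.1.symm fun k hk => ?_
  simp only [childOf]
  split_ifs with hku
  · exact congrArg v.1.2 (Fin.ext hku).symm
  · exact (hp.2 k (by change (k : ℕ) < depth u + 1 at hk; omega)).symm

def children (u : Vert d h) : Finset (Vert d h) := Finset.univ.filter (IsParent u)

def parents (v : Vert d h) : Finset (Vert d h) := Finset.univ.filter (IsParent · v)

@[simp] lemma mem_children {u v : Vert d h} : v ∈ children u ↔ IsParent u v := by
  simp [children]

@[simp] lemma mem_parents {u v : Vert d h} : u ∈ parents v ↔ IsParent u v := by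
  simp [parents]

lemma parents_eq_singleton {p v : Vert d h} (hp : IsParent p v) : parents v = {p} :=
  Finset.eq_singleton_iff_unique_mem.mpr
    ⟨mem_parents.mpr hp, fun _ hq => (mem_parents.mp hq).unique hp⟩

lemma parents_eq_empty {v : Vert d h} (hv : depth v = 0) : parents v = ∅ :=
  Finset.eq_empty_of_forall_notMem fun p hp => by have := (mem_parents.mp hp).1; omega

lemma card_parents_le_one (v : Vert d h) : (parents v).card ≤ 1 :=
  Finset.card_le_one.mpr fun _ hp _ hq => (mem_parents.mp hp).unique (mem_parents.mp hq)

lemma children_eq_empty {u : Vert d h} (hu : depth u = h) : children u = ∅ :=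
  Finset.eq_empty_of_forall_notMem fun v hv => by
    have := (mem_children.mp hv).1; have := depth_le v; omega

lemma card_children {u : Vert d h} (hu : depth u < h) :
    (children u).card = if depth u = 0 then d else d - 1 := by
  rw [← Finset.card_range (if depth u = 0 then d else d - 1)]
  refine Finset.card_bij' (fun v _ => (v.1.2 ⟨depth u, hu⟩ : ℕ))
    (fun t ht => childOf u hu t
      (by have := Finset.mem_range.mp ht; split_ifs at this <;> omega)
      (fun h0 => by simpa [h0.ne'] using Finset.mem_range.mp ht))
    (fun v hv => ?_) (fun t _ => mem_children.mpr (isParent_childOf ..))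
    (fun v hv => childOf_eq_of_isParent (mem_children.mp hv) hu _) (fun t _ => childOf_step ..)
  have hv := mem_children.mp hv
  rw [Finset.mem_range]
  split_ifs with h0
  · exact (v.1.2 _).isLt
  · exact v.2.2 ⟨depth u, hu⟩ (Nat.pos_of_ne_zero h0)
      (show depth u < depth v by rw [hv.1]; omega)

lemma card_parents_add_card_children {u : Vert d h} (hu : depth u < h) :
    (parents u).card + (children u).card = d := by
  rw [card_children hu]
  split_ifs with h0
  · simp [parents_eq_empty h0]
  · obtain ⟨p, hp⟩ := exists_isParent (Nat.pos_of_ne_zero h0)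
    have := (u.1.2 ⟨0, (Nat.zero_le _).trans_lt hu⟩).pos
    rw [parents_eq_singleton hp, Finset.card_singleton]
    omega

lemma theta_zero (d : ℕ) : theta d 0 = 0 := by simp [theta]

lemma theta_succ (hd : 3 ≤ d) (m : ℕ) : theta d (m + 1) = (d - 1) * theta d m + 1 := by
  obtain ⟨e, rfl⟩ : ∃ e, d = e + 3 := ⟨d - 3, by omega⟩
  obtain ⟨q, hq⟩ : e + 1 ∣ (e + 2) ^ m - 1 := by simpa using Nat.sub_one_dvd_pow_sub_one (e + 2) m
  have hsucc : (e + 2) ^ (m + 1) - 1 = (e + 1) * ((e + 2) * q + 1) := by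
    have := Nat.one_le_pow m (e + 2) (by omega)
    zify [this, Nat.one_le_pow (m + 1) (e + 2) (by omega)] at hq ⊢
    linear_combination (e + 2 : ℤ) * hq
  simp only [theta, show e + 3 - 1 = e + 2 by omega, show e + 3 - 2 = e + 1 by omega, hq, hsucc,
    Nat.mul_div_cancel_left _ (Nat.succ_pos e)]

lemma theta_recurrence (hd : 3 ≤ d) (m : ℕ) :
    (d : ℤ) * theta d (m + 1) = theta d (m + 2) + (d - 1) * theta d m := by
  rw [theta_succ hd (m + 1), theta_succ hd m]
  push_cast [show 1 ≤ d by omega]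
  ring

lemma isCoprime_theta_succ (hd : 3 ≤ d) (m : ℕ) :
    IsCoprime (theta d (m + 1) : ℤ) (theta d m) :=
  ⟨1, -(d - 1 : ℤ), by rw [theta_succ hd]; push_cast [show 1 ≤ d by omega]; ring⟩

def laplacian (d h : ℕ) : (Vert d h → ℤ) →ₗ[ℤ] Vert d h → ℤ :=
  Fintype.linearCombination ℤ (delta d h)

lemma lat_eq_range_laplacian (d h : ℕ) :
    lat d h = (LinearMap.range (laplacian d h)).toAddSubgroup := by
  rw [laplacian, Fintype.range_linearCombination, Submodule.span_int_eq_addSubgroupClosure, lat]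

lemma laplacian_apply (c : Vert d h → ℤ) (u : Vert d h) :
    laplacian d h c u = d * c u - ∑ v ∈ parents u, c v - ∑ v ∈ children u, c v := by
  simp only [laplacian, Fintype.linearCombination_apply, delta, Finset.sum_apply, Pi.smul_apply,
    Pi.sub_apply, smul_eq_mul, Finset.sum_pi_single, Finset.mem_filter, Finset.mem_univ, true_and,
    mul_sub, Finset.sum_sub_distrib, mul_ite, mul_one, mul_zero]
  simp only [parents, children, Finset.sum_filter, Pi.single_apply, mul_ite, mul_one, mul_zero,
    Finset.sum_ite_eq, Finset.mem_univ, if_true]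
  ring

lemma nonpos_of_laplacian_eq_zero (hd : 2 ≤ d) {c : Vert d h → ℤ} (hc : laplacian d h c = 0)
    (v : Vert d h) : c v ≤ 0 := by
  have : Nonempty (Vert d h) := ⟨root d h (by omega)⟩
  -- `u` is a deepest vertex among those where `c` is maximal
  obtain ⟨u, -, hu⟩ := Finset.exists_max_image Finset.univ (fun v => toLex (c v, depth v))
    Finset.univ_nonempty
  have hmax (v : Vert d h) : c v ≤ c u := by
    rcases Prod.Lex.le_iff.mp (hu v (Finset.mem_univ v)) with h | h
    exacts [h.le, h.1.le]
  have hdeeper (v : Vert d h) (hv : depth u < depth v) : c v < c u := by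
    rcases Prod.Lex.le_iff.mp (hu v (Finset.mem_univ v)) with h | h
    exacts [h, absurd h.2 (not_le.mpr hv)]
  have hbalance : d * c u = ∑ v ∈ parents u, c v + ∑ v ∈ children u, c v := by
    have := congrFun hc u
    rw [laplacian_apply] at this
    simp only [Pi.zero_apply] at this
    linarith
  have hparents : ∑ v ∈ parents u, c v ≤ (parents u).card * c u := by
    simpa using Finset.sum_le_card_nsmul _ _ _ fun v _ => hmax v
  refine (hmax v).trans ?_
  rcases (children u).eq_empty_or_nonempty with hleaf | ⟨w, hw⟩
  · rw [hleaf, Finset.sum_empty, add_zero] at hbalance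
    have : ((parents u).card : ℤ) ≤ 1 := by exact_mod_cast card_parents_le_one u
    nlinarith
  · have hw := mem_children.mp hw
    have hchildren : ∑ v ∈ children u, c v < (children u).card * c u := by
      simpa using Finset.sum_lt_sum_of_nonempty ⟨w, mem_children.mpr hw⟩ fun v hv =>
        hdeeper v (by rw [(mem_children.mp hv).1]; omega)
    have hu : depth u < h := by have := hw.1; have := depth_le w; omega
    have : (d : ℤ) = (parents u).card + (children u).card := by
      exact_mod_cast (card_parents_add_card_children hu).symm
    nlinarith

lemma laplacian_injective (hd : 2 ≤ d) : Function.Injective (laplacian d h) := by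
  refine (injective_iff_map_eq_zero _).mpr fun c hc => funext fun v => le_antisymm
    (nonpos_of_laplacian_eq_zero hd hc v) ?_
  simpa using nonpos_of_laplacian_eq_zero hd (c := -c) (by rw [map_neg, hc, neg_zero]) v

def InSubtree (j v : Vert d h) : Prop :=
  depth j ≤ depth v ∧ ∀ k : Fin h, (k : ℕ) < depth j → v.1.2 k = j.1.2 k

instance (j v : Vert d h) : Decidable (InSubtree j v) := by unfold InSubtree; infer_instance

lemma inSubtree_self (j : Vert d h) : InSubtree j j := ⟨le_rfl, fun _ _ => rfl⟩

lemma InSubtree.eq_of_depth_le {j v : Vert d h} (hv : InSubtree j v) (hdepth : depth v ≤ depth j) :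
    v = j :=
  Vert.ext_of_depth (le_antisymm hdepth hv.1) fun k hk => hv.2 k (by omega)

lemma InSubtree.eq_of_depth_eq {j₁ j₂ v : Vert d h} (h₁ : InSubtree j₁ v) (h₂ : InSubtree j₂ v)
    (hdepth : depth j₁ = depth j₂) : j₁ = j₂ :=
  Vert.ext_of_depth hdepth fun k hk => (h₁.2 k hk).symm.trans (h₂.2 k (hdepth ▸ hk))

lemma IsParent.inSubtree_iff {j u v : Vert d h} (hp : IsParent u v) :
    InSubtree j v ↔ InSubtree j u ∨ v = j := by
  have hdepth := hp.1
  constructor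
  · intro hv
    by_cases hvj : depth v ≤ depth j
    · exact .inr (hv.eq_of_depth_le hvj)
    · exact .inl ⟨by omega, fun k hk => (hp.2 k (by omega)).symm.trans (hv.2 k hk)⟩
  · rintro (hu | rfl)
    · have := hu.1
      exact ⟨by omega, fun k hk => (hp.2 k (by omega)).trans (hu.2 k hk)⟩
    · exact inSubtree_self v

def subtreeWeight (j v : Vert d h) : ℤ :=
  if InSubtree j v then theta d (h + 1 - depth v) else 0

lemma sum_parents_subtreeWeight {p j : Vert d h} (hp : IsParent p j) (u : Vert d h) :
    ∑ v ∈ parents u, subtreeWeight j v =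
      if InSubtree j u ∧ u ≠ j then (theta d (h + 2 - depth u) : ℤ) else 0 := by
  rcases Nat.eq_zero_or_pos (depth u) with hu | hu
  · have : ¬ InSubtree j u := fun hju => by have := hju.1; have := hp.1; omega
    simp [parents_eq_empty hu, this]
  · obtain ⟨q, hq⟩ := exists_isParent hu
    have hjq : InSubtree j q ↔ InSubtree j u ∧ u ≠ j := by
      rw [hq.inSubtree_iff]
      refine ⟨fun hjq => ⟨.inl hjq, fun huj => ?_⟩, fun ⟨hju, huj⟩ => hju.resolve_right huj⟩
      have := hjq.1; have := hq.1; rw [huj] at *; omega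
    simp only [parents_eq_singleton hq, Finset.sum_singleton, subtreeWeight, hjq,
      show h + 1 - depth q = h + 2 - depth u by have := hq.1; omega]

lemma sum_children_subtreeWeight {p j : Vert d h} (hp : IsParent p j) (u : Vert d h) :
    ∑ v ∈ children u, subtreeWeight j v =
      if InSubtree j u then ((d - 1 : ℕ) : ℤ) * theta d (h - depth u)
      else if u = p then (theta d (h + 1 - depth j) : ℤ) else 0 := by
  split_ifs with hju hup
  · rcases (depth_le u).eq_or_lt with hleaf | hlt
    · simp [children_eq_empty hleaf, hleaf, theta_zero]
    · have hchild : ∀ v ∈ children u, subtreeWeight j v = theta d (h - depth u) := fun v hv => by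
        have hv := mem_children.mp hv
        rw [subtreeWeight, if_pos (hv.inSubtree_iff.mpr (.inl hju)), hv.1,
          show h + 1 - (depth u + 1) = h - depth u by omega]
      rw [Finset.sum_congr rfl hchild, Finset.sum_const, card_children hlt,
        if_neg (by have := hju.1; have := hp.1; omega), nsmul_eq_mul]
  · subst hup
    rw [Finset.sum_eq_single_of_mem j (mem_children.mpr hp), subtreeWeight,
      if_pos (inSubtree_self j)]
    intro v hv hvj
    rw [subtreeWeight, if_neg]
    exact fun hjv => hvj (((mem_children.mp hv).inSubtree_iff.mp hjv).resolve_left hju)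
  · refine Finset.sum_eq_zero fun v hv => if_neg fun hjv => ?_
    have hv := mem_children.mp hv
    obtain rfl := (hv.inSubtree_iff.mp hjv).resolve_left hju
    exact hup (hv.unique hp)

theorem laplacian_subtreeWeight (hd : 3 ≤ d) {p j : Vert d h} (hp : IsParent p j) :
    laplacian d h (subtreeWeight j) =
      (theta d (h + 2 - depth j) : ℤ) • Pi.single j 1
        - (theta d (h + 1 - depth j) : ℤ) • Pi.single p 1 := by
  have hpj : p ≠ j := by rintro rfl; have := hp.1; omega
  have hjp : ¬ InSubtree j p := fun hjp => by have := hjp.1; have := hp.1; omega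
  funext u
  rw [laplacian_apply, sum_parents_subtreeWeight hp, sum_children_subtreeWeight hp]
  simp only [Pi.sub_apply, Pi.smul_apply, Pi.single_apply, smul_eq_mul, subtreeWeight]
  push_cast [show 1 ≤ d by omega]
  by_cases hju : InSubtree j u
  · have hrec := theta_recurrence hd (h - depth u)
    rw [show h - depth u + 1 = h + 1 - depth u by have := depth_le u; omega,
      show h - depth u + 2 = h + 2 - depth u by have := depth_le u; omega] at hrec
    by_cases huj : u = j
    · subst huj
      simp only [hju, hpj.symm, ne_eq, not_true, and_false, if_true, if_false]
      linarith
    · have hup : u ≠ p := by rintro rfl; exact hjp hju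
      simp only [hju, huj, hup, ne_eq, not_false_eq_true, and_self, if_true, if_false]
      linarith
  · by_cases hup : u = p
    · subst hup
      simp [hju, hpj]
    · have huj : u ≠ j := by rintro rfl; exact hju (inSubtree_self _)
      simp [hju, hup, huj]

end SandpileTree

open SandpileTree

theorem order_of_sibling_difference_general (d h n : ℕ) (hd : 3 ≤ d)
    (j₁ j₂ i : Vert d h) (hne : j₁ ≠ j₂) (hj₁ : depth j₁ = n) (hj₂ : depth j₂ = n)
    (hi₁ : IsParent i j₁) (hi₂ : IsParent i j₂) :
    addOrderOf (xbar d h j₁ - xbar d h j₂) = theta d (h + 2 - n) := by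
  have hrel : laplacian d h (subtreeWeight j₁ - subtreeWeight j₂)
      = (theta d (h + 2 - n) : ℤ) • (Pi.single j₁ 1 - Pi.single j₂ 1) := by
    rw [map_sub, laplacian_subtreeWeight hd hi₁, laplacian_subtreeWeight hd hi₂, hj₁, hj₂]
    module
  have hj₁_notin : ¬ InSubtree j₂ j₁ := fun h₂ =>
    hne ((inSubtree_self j₁).eq_of_depth_eq h₂ (hj₁.trans hj₂.symm))
  have hcop : IsCoprime (theta d (h + 2 - n) : ℤ)
      ((subtreeWeight j₁ - subtreeWeight j₂) j₁) := by
    have := depth_le j₁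
    simpa [subtreeWeight, inSubtree_self, hj₁_notin, hj₁, show h + 2 - n = h + 1 - n + 1 by omega]
      using isCoprime_theta_succ hd (h + 1 - n)
  rw [xbar, xbar, ← QuotientAddGroup.mk_sub]
  refine addOrderOf_mk_eq_of_nsmul_mem_iff fun k => ?_
  rw [lat_eq_range_laplacian, Submodule.mem_toAddSubgroup, ← natCast_zsmul,
    smul_mem_range_iff_dvd (laplacian_injective (by omega)) hrel hcop, Int.natCast_dvd_natCast]

/-- In the sandpile group `G(d,h)` of the `d`-regular tree of depth `h`, if `j₁` and `j₂`
are siblings at depth `n` (`1 ≤ n ≤ h`), then the order of `x̄_{j₁} − x̄_{j₂}` is exactly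
`θ(d, h+2−n) = ((d−1)^{h+2−n} − 1)/(d−2)`. -/
theorem order_of_sibling_difference (d h n : ℕ) (hd : 3 ≤ d) (hn : 1 ≤ n) (hnh : n ≤ h)
    (j₁ j₂ i : Vert d h) (hne : j₁ ≠ j₂) (hj₁ : depth j₁ = n) (hj₂ : depth j₂ = n)
    (hi₁ : IsParent i j₁) (hi₂ : IsParent i j₂) :
    addOrderOf (xbar d h j₁ - xbar d h j₂) = theta d (h + 2 - n) :=
  order_of_sibling_difference_general d h n hd j₁ j₂ i hne hj₁ hj₂ hi₁ hi₂
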